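/- Let Ξ be a measurable space, Ξ0 ⊆ Ξ a measurable subset, and P_c a probability measure on Ξ with P_c(Ξ0) > 0. Let f : Ξ → ℝ be measurable with f(ξ) ≥ 0 for all ξ ∈ Ξ. Let Q be a probability measure on Ξ, let p > 1 and q := p/(p−1), and assume M_p := (E_Q[f^p])^{1/p} < ∞. Suppose there exist ε ∈ [0,1] and γ ∈ [0,1) such that Q(Ξ0) ≥ 1−γ and the normalized restriction Q_{Ξ0} can be written as Q_{Ξ0} = (1−ε)·P_{c,Ξ0} + ε·R for some probability measure R supported on Ξ0. Then E_Q[f] ≤ (1−ε)·E_{P_{c,Ξ0}}[f] + ε·sup_{ξ ∈ Ξ0} f(ξ) + M_p·γ^{1/q}. -/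

import Mathlib

open MeasureTheory
open scoped ENNReal

/-- Normalised restriction of a measure to a set: `P_{Ξ₀}(A) = P(A ∩ Ξ₀)/P(Ξ₀)`. -/
noncomputable def nrestrict {Ξ : Type*} [MeasurableSpace Ξ]
    (P : Measure Ξ) (S : Set Ξ) : Measure Ξ :=
  (P S)⁻¹ • P.restrict S

/-- **Tail decomposition lemma.**
If `Q(Ξ₀) ≥ 1-γ` and the normalised restriction `Q_{Ξ₀}` is a contamination
`(1-ε)·P_{c,Ξ₀} + ε·R` of the normalised restriction of the centre `P_c`, with `f ≥ 0`
measurable and `M_p := (E_Q[f^p])^{1/p} < ∞` for some `p > 1`, `q = p/(p-1)`, then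
`E_Q[f] ≤ (1-ε)·E_{P_{c,Ξ₀}}[f] + ε·sup_{Ξ₀} f + M_p·γ^{1/q}`. -/
theorem tail_decomposition
    {Ξ : Type*} [MeasurableSpace Ξ] (Ξ₀ : Set Ξ) (hΞ₀ : MeasurableSet Ξ₀)
    (Pc : Measure Ξ) [IsProbabilityMeasure Pc] (hPc : Pc Ξ₀ ≠ 0)
    (f : Ξ → ℝ) (hfm : Measurable f) (hfnn : ∀ x, 0 ≤ f x)
    (Q : Measure Ξ) [IsProbabilityMeasure Q]
    (p : ℝ) (hp : 1 < p) (q : ℝ) (hq : q = p / (p - 1))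
    (hfp : Integrable (fun x => f x ^ p) Q)
    (Mp : ℝ) (hMp : Mp = (∫ x, f x ^ p ∂Q) ^ (1 / p))
    (ε : ℝ) (hε0 : 0 ≤ ε) (hε1 : ε ≤ 1)
    (γ : ℝ) (hγ0 : 0 ≤ γ) (hγ1 : γ < 1)
    (hQΞ₀ : ENNReal.ofReal (1 - γ) ≤ Q Ξ₀)
    (R : Measure Ξ) [IsProbabilityMeasure R] (hR : R Ξ₀ = 1)
    (hmix : nrestrict Q Ξ₀
      = ENNReal.ofReal (1 - ε) • nrestrict Pc Ξ₀ + ENNReal.ofReal ε • R) :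
    ((∫ x, f x ∂Q : ℝ) : EReal)
      ≤ (((1 - ε) * ∫ x, f x ∂(nrestrict Pc Ξ₀) : ℝ) : EReal)
        + (ε : EReal) * (⨆ ξ ∈ Ξ₀, (f ξ : EReal))
        + ((Mp * γ ^ (1 / q) : ℝ) : EReal) := by
  classical
  set g : Ξ → ℝ≥0∞ := fun x => ENNReal.ofReal (f x) with hgdef
  have hgm : Measurable g := hfm.ennreal_ofReal
  have hq0 : 0 < q := by
    rw [hq]; exact div_pos (by linarith) (by linarith)
  -- integrability of f w.r.t. Q
  have hfi : Integrable f Q := by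
    refine (hfp.add (integrable_const 1)).mono' hfm.aestronglyMeasurable ?_
    filter_upwards with x
    rw [Real.norm_of_nonneg (hfnn x)]
    rcases le_or_gt (f x) 1 with h | h
    · have := Real.rpow_nonneg (hfnn x) p
      simp only [Pi.add_apply]
      linarith
    · have h2 : f x ^ (1:ℝ) ≤ f x ^ p :=
        Real.rpow_le_rpow_of_exponent_le h.le hp.le
      rw [Real.rpow_one] at h2
      simp only [Pi.add_apply]
      linarith
  have hint_fp_nonneg : 0 ≤ ∫ x, f x ^ p ∂Q :=
    integral_nonneg fun x => Real.rpow_nonneg (hfnn x) p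
  have hMp0 : 0 ≤ Mp := hMp ▸ Real.rpow_nonneg hint_fp_nonneg _
  have hγq : 0 ≤ γ ^ (1/q) := Real.rpow_nonneg hγ0 _
  -- basic lintegral quantities
  have hLofReal : ENNReal.ofReal (∫ x, f x ∂Q) = ∫⁻ x, g x ∂Q :=
    ofReal_integral_eq_lintegral_ofReal hfi (Filter.Eventually.of_forall hfnn)
  have hLne : (∫⁻ x, g x ∂Q) ≠ ⊤ := by rw [← hLofReal]; exact ENNReal.ofReal_ne_top
  set X₀ := ∫⁻ x in Ξ₀, g x ∂Q with hX₀def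
  set Xc := ∫⁻ x in Ξ₀ᶜ, g x ∂Q with hXcdef
  have hsplit : X₀ + Xc = ∫⁻ x, g x ∂Q := lintegral_add_compl g hΞ₀
  have hX₀ne : X₀ ≠ ⊤ := by
    intro h; rw [← hsplit, h, top_add] at hLne; exact hLne rfl
  have hXcne : Xc ≠ ⊤ := by
    intro h; rw [← hsplit, h, add_top] at hLne; exact hLne rfl
  -- Hölder tail bound
  have hconj : p.HolderConjugate q := by
    have := Real.HolderConjugate.conjExponent hp
    rwa [show p.conjExponent = q from hq.symm] at this
  have hQc : Q Ξ₀ᶜ ≤ ENNReal.ofReal γ := by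
    rw [measure_compl hΞ₀ (measure_ne_top Q _), measure_univ]
    calc 1 - Q Ξ₀ ≤ 1 - ENNReal.ofReal (1-γ) := tsub_le_tsub_left hQΞ₀ 1
    _ = ENNReal.ofReal γ := by
        rw [← ENNReal.ofReal_one, ← ENNReal.ofReal_sub _ (by linarith : (0:ℝ) ≤ 1-γ)]
        norm_num
  have hgp : ∫⁻ x, g x ^ p ∂Q = ENNReal.ofReal (∫ x, f x ^ p ∂Q) := by
    rw [ofReal_integral_eq_lintegral_ofReal hfp
      (Filter.Eventually.of_forall fun x => Real.rpow_nonneg (hfnn x) p)]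
    refine lintegral_congr fun x => ?_
    exact ENNReal.ofReal_rpow_of_nonneg (hfnn x) (by linarith)
  have htail : Xc ≤ ENNReal.ofReal (Mp * γ ^ (1/q)) := by
    have hind : Measurable ((Ξ₀ᶜ).indicator (fun _ => (1:ℝ≥0∞))) :=
      measurable_const.indicator hΞ₀.compl
    have h1 : Xc = ∫⁻ x, (g * (Ξ₀ᶜ).indicator (fun _ => (1:ℝ≥0∞))) x ∂Q := by
      rw [hXcdef, ← lintegral_indicator hΞ₀.compl]
      refine lintegral_congr fun x => ?_
      by_cases hx : x ∈ Ξ₀ᶜ <;> simp [hx]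
    have h2 := ENNReal.lintegral_mul_le_Lp_mul_Lq Q hconj hgm.aemeasurable hind.aemeasurable
    rw [← h1] at h2
    have h3 : ∫⁻ x, ((Ξ₀ᶜ).indicator (fun _ => (1:ℝ≥0∞)) x) ^ q ∂Q = Q Ξ₀ᶜ := by
      have : ∀ x, ((Ξ₀ᶜ).indicator (fun _ => (1:ℝ≥0∞)) x) ^ q
          = (Ξ₀ᶜ).indicator (fun _ => (1:ℝ≥0∞)) x := by
        intro x
        by_cases hx : x ∈ Ξ₀ᶜ <;>
          simp [hx, ENNReal.zero_rpow_of_pos hq0]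
      rw [lintegral_congr this, lintegral_indicator hΞ₀.compl]
      simp
    rw [h3, hgp, ENNReal.ofReal_rpow_of_nonneg hint_fp_nonneg (by positivity), ← hMp] at h2
    calc Xc ≤ ENNReal.ofReal Mp * (Q Ξ₀ᶜ) ^ (1/q) := h2
    _ ≤ ENNReal.ofReal Mp * (ENNReal.ofReal γ) ^ (1/q) :=
        mul_le_mul_right (ENNReal.rpow_le_rpow hQc (by positivity)) _
    _ = ENNReal.ofReal (Mp * γ ^ (1/q)) := by
        rw [ENNReal.ofReal_rpow_of_nonneg hγ0 (by positivity), ENNReal.ofReal_mul hMp0]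
  -- mixture decomposition of the lintegral over the normalised restriction
  have hQΞ₀pos : Q Ξ₀ ≠ 0 := by
    intro h
    rw [h, nonpos_iff_eq_zero, ENNReal.ofReal_eq_zero] at hQΞ₀
    linarith
  set nQ := nrestrict Q Ξ₀ with hnQdef
  have hnQl : ∫⁻ x, g x ∂nQ = (Q Ξ₀)⁻¹ * X₀ := by
    rw [hnQdef, nrestrict, lintegral_smul_measure, smul_eq_mul]
  have hnQne : (∫⁻ x, g x ∂nQ) ≠ ⊤ := by
    rw [hnQl]
    exact ENNReal.mul_ne_top (ENNReal.inv_ne_top.2 hQΞ₀pos) hX₀ne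
  have hX₀le : X₀ ≤ ∫⁻ x, g x ∂nQ := by
    rw [hnQl]
    exact le_mul_of_one_le_left zero_le (ENNReal.one_le_inv.2 prob_le_one)
  set IPc := ∫⁻ x, g x ∂(nrestrict Pc Ξ₀) with hIPcdef
  set IR := ∫⁻ x, g x ∂ R with hIRdef
  have hmixl : ∫⁻ x, g x ∂nQ = ENNReal.ofReal (1-ε) * IPc + ENNReal.ofReal ε * IR := by
    rw [hmix, lintegral_add_measure, lintegral_smul_measure, lintegral_smul_measure, smul_eq_mul, smul_eq_mul]
  have hAeq : ∫ x, f x ∂(nrestrict Pc Ξ₀) = IPc.toReal :=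
    integral_eq_lintegral_of_nonneg_ae (Filter.Eventually.of_forall hfnn)
      hfm.aestronglyMeasurable
  -- the supremum
  obtain ⟨ξ₀, hξ₀⟩ : Ξ₀.Nonempty := by
    rcases Ξ₀.eq_empty_or_nonempty with h | h
    · exact absurd (by rw [h]; exact measure_empty) hPc
    · exact h
  set S := ⨆ ξ ∈ Ξ₀, (f ξ : EReal) with hSdef
  have hS0 : (0:EReal) ≤ S :=
    le_trans (by simpa using EReal.coe_nonneg.2 (hfnn ξ₀))
      (le_biSup (fun ξ => (f ξ : EReal)) hξ₀)
  have hSbot : S ≠ ⊥ := fun h => by rw [h] at hS0; exact absurd hS0 (by simp)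
  -- trivial case : the supremum is infinite and ε > 0
  by_cases htriv : S = ⊤ ∧ 0 < ε
  · obtain ⟨hStop, hεpos⟩ := htriv
    rw [hStop, EReal.mul_top_of_pos (by exact_mod_cast hεpos)]
    rw [EReal.add_top_iff_ne_bot.mpr (EReal.coe_ne_bot _), add_comm,
      EReal.add_top_iff_ne_bot.mpr (EReal.coe_ne_bot _)]
    exact le_top
  have hcase : S = ⊤ → ε = 0 := by
    intro h
    by_contra hne
    exact htriv ⟨h, lt_of_le_of_ne hε0 (Ne.symm hne)⟩
  set B : ℝ := S.toReal with hBdef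
  have hB0 : 0 ≤ B := by
    rcases eq_or_ne S ⊤ with h | h
    · simp [hBdef, h]
    · have hSB := EReal.coe_toReal h hSbot
      rw [← hSB] at hS0
      exact_mod_cast hS0
  -- key bounds in the non-trivial case
  have hεIR : ε * IR.toReal ≤ ε * B := by
    rcases eq_or_ne S ⊤ with hStop | hSne
    · rw [hcase hStop]; simp
    · have hSB : S = (B : EReal) := (EReal.coe_toReal hSne hSbot).symm
      have hbound : ∀ ξ ∈ Ξ₀, f ξ ≤ B := by
        intro ξ hξ
        have : (f ξ : EReal) ≤ S := le_biSup (fun ξ => (f ξ : EReal)) hξ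
        rw [hSB] at this
        exact_mod_cast this
      have hRc : R Ξ₀ᶜ = 0 := by
        rw [measure_compl hΞ₀ (measure_ne_top R _), measure_univ, hR, tsub_self]
      have hae : ∀ᵐ x ∂ R, g x ≤ ENNReal.ofReal B := by
        rw [ae_iff]
        refine measure_mono_null ?_ hRc
        intro x hx
        simp only [Set.mem_setOf_eq, not_le] at hx
        intro hxΞ₀
        exact absurd (ENNReal.ofReal_le_ofReal (hbound x hxΞ₀)) (not_le.2 hx)
      have hIRle : IR ≤ ENNReal.ofReal B := by
        calc IR ≤ ∫⁻ _, ENNReal.ofReal B ∂ R := lintegral_mono_ae hae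
        _ = ENNReal.ofReal B := by rw [lintegral_const, measure_univ, mul_one]
      exact mul_le_mul_of_nonneg_left (ENNReal.toReal_le_of_le_ofReal hB0 hIRle) hε0
  have hεS : ((ε * B : ℝ) : EReal) ≤ (ε : EReal) * S := by
    rcases eq_or_ne S ⊤ with hStop | hSne
    · rw [hcase hStop]; simp
    · rw [(EReal.coe_toReal hSne hSbot).symm, ← EReal.coe_mul]
  -- main real inequality
  have hmain : ∫ x, f x ∂Q
      ≤ (1-ε) * (∫ x, f x ∂(nrestrict Pc Ξ₀)) + ε * B + Mp * γ ^ (1/q) := by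
    have h1 : ∫ x, f x ∂Q = X₀.toReal + Xc.toReal := by
      rw [integral_eq_lintegral_of_nonneg_ae (Filter.Eventually.of_forall hfnn)
        hfm.aestronglyMeasurable, ← hsplit, ENNReal.toReal_add hX₀ne hXcne]
    have h2 : Xc.toReal ≤ Mp * γ ^ (1/q) :=
      ENNReal.toReal_le_of_le_ofReal (by positivity) htail
    have hsumne := hmixl ▸ hnQne
    have hne1 : ENNReal.ofReal (1-ε) * IPc ≠ ⊤ := (ENNReal.add_ne_top.1 hsumne).1
    have hne2 : ENNReal.ofReal ε * IR ≠ ⊤ := (ENNReal.add_ne_top.1 hsumne).2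
    have h3 : X₀.toReal ≤ (1-ε) * IPc.toReal + ε * IR.toReal := by
      have hmono := ENNReal.toReal_mono hnQne hX₀le
      rw [hmixl, ENNReal.toReal_add hne1 hne2, ENNReal.toReal_mul, ENNReal.toReal_mul,
        ENNReal.toReal_ofReal (by linarith : (0:ℝ) ≤ 1-ε),
        ENNReal.toReal_ofReal hε0] at hmono
      exact hmono
    rw [h1, hAeq]
    linarith
  -- conclude in EReal
  calc ((∫ x, f x ∂Q : ℝ) : EReal)
      ≤ (((1-ε) * (∫ x, f x ∂(nrestrict Pc Ξ₀)) + ε * B + Mp * γ ^ (1/q) : ℝ) : EReal) := by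
        exact_mod_cast hmain
    _ = (((1-ε) * (∫ x, f x ∂(nrestrict Pc Ξ₀)) : ℝ) : EReal) + ((ε * B : ℝ) : EReal)
        + ((Mp * γ ^ (1/q) : ℝ) : EReal) := by
        rw [← EReal.coe_add, ← EReal.coe_add]
    _ ≤ _ := by
        exact add_le_add_left (add_le_add_right hεS _) _
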